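/- arXiv:2306.14820 — 2 statements merged into one kernel-verified Lean document; each statement's English description precedes it below -/
import Mathlib

section
/- Let M be an n×n symmetric diagonally dominant matrix with decomposition M = D - A, where D is diagonal with strictly positive entries. Let N = D^{-1/2} M D^{-1/2} be the normalization of M. Then for any vector x orthogonal to the null space of M, x^T M^† x = (1/2)⟨D^{-1} x, D^{1/2}(N/2)^† D^{-1/2} x⟩ = ⟨D^{-1/2} x, N^† D^{-1/2} x⟩. -/
/-!
Write `S = D^{1/2}`, so that `N = S⁻¹ M S⁻¹`. A vector orthogonal to the kernel of the symmetric
matrix `M` lies in its range, `x = M y`, and on the range the quadratic form of any Moore–Penrose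
inverse is forced: `(M y)ᵀ M^† (M y) = yᵀ M M^† M y = yᵀ M y`. Since `S⁻¹ x = N (S y)`, the same
computation for `N` gives `(S y)ᵀ N (S y) = yᵀ M y` again. Finally `(N/2)^† = 2 N^†` by uniqueness
of the Moore–Penrose inverse, and the diagonal factors in the middle expression cancel.
-/

open Matrix

/-- `P` is the Moore–Penrose pseudoinverse of `M`. -/
def IsMoorePenrose {n : ℕ} (M P : Matrix (Fin n) (Fin n) ℝ) : Prop :=
  M * P * M = M ∧ P * M * P = P ∧ (M * P)ᵀ = M * P ∧ (P * M)ᵀ = P * M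

theorem mulVec_dotProduct_mulVec {n : ℕ} (A U : Matrix (Fin n) (Fin n) ℝ) (y : Fin n → ℝ) :
    (U *ᵥ y) ⬝ᵥ A *ᵥ (U *ᵥ y) = y ⬝ᵥ (Uᵀ * A * U) *ᵥ y := by
  rw [← mulVec_mulVec, ← mulVec_mulVec, dotProduct_transpose_mulVec, dotProduct_comm]

namespace IsMoorePenrose

variable {n : ℕ} {M P Q : Matrix (Fin n) (Fin n) ℝ}

theorem self_mul_eq (hP : IsMoorePenrose M P) (hQ : IsMoorePenrose M Q) :
    M * P = M * Q := by
  obtain ⟨hP1, -, hP3, -⟩ := hP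
  obtain ⟨hQ1, -, hQ3, -⟩ := hQ
  calc M * P = Pᵀ * (M * Q * M)ᵀ := by rw [← hP3, transpose_mul, hQ1]
    _ = (M * P)ᵀ * (M * Q)ᵀ := by rw [transpose_mul (M * Q), ← mul_assoc, ← transpose_mul]
    _ = M * Q := by rw [hP3, hQ3, ← mul_assoc, hP1]

theorem mul_self_eq (hP : IsMoorePenrose M P) (hQ : IsMoorePenrose M Q) :
    P * M = Q * M := by
  obtain ⟨hP1, -, -, hP4⟩ := hP
  obtain ⟨hQ1, -, -, hQ4⟩ := hQ
  calc P * M = (M * Q * M)ᵀ * Pᵀ := by rw [← hP4, transpose_mul, hQ1]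
    _ = (Q * M)ᵀ * (P * M)ᵀ := by
      rw [mul_assoc M Q M, transpose_mul M, mul_assoc, ← transpose_mul]
    _ = Q * M := by rw [hQ4, hP4, mul_assoc, ← mul_assoc M, hP1]

theorem unique (hP : IsMoorePenrose M P) (hQ : IsMoorePenrose M Q) : P = Q := by
  calc P = P * M * P := hP.2.1.symm
    _ = Q * M * Q := by
      rw [mul_self_eq hP hQ, mul_assoc, self_mul_eq hP hQ, mul_assoc]
    _ = Q := hQ.2.1

theorem smul (hP : IsMoorePenrose M P) {c : ℝ} (hc : c ≠ 0) :
    IsMoorePenrose (c • M) (c⁻¹ • P) := by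
  obtain ⟨h1, h2, h3, h4⟩ := hP
  refine ⟨?_, ?_, ?_, ?_⟩ <;>
    simp only [smul_mul_assoc, mul_smul_comm, smul_smul, inv_mul_cancel₀ hc,
      mul_inv_cancel₀ hc, one_smul, h1, h2, h3, h4]

/-- `x - P M x` lies in the kernel of `M` and is orthogonal to `P M x`, because `P M` is a
symmetric idempotent. -/
theorem mulVec_mulVec_eq_of_orthogonal_ker (hP : IsMoorePenrose M P) {x : Fin n → ℝ}
    (hx : ∀ y, M *ᵥ y = 0 → x ⬝ᵥ y = 0) : P *ᵥ (M *ᵥ x) = x := by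
  obtain ⟨h1, -, -, h4⟩ := hP
  set z := x - P *ᵥ (M *ᵥ x)
  have hMz : M *ᵥ z = 0 := by
    simp only [z, mulVec_sub, mulVec_mulVec, ← mul_assoc, h1, sub_self]
  have hPMz : (P *ᵥ (M *ᵥ x)) ⬝ᵥ z = 0 := by
    rw [mulVec_mulVec, dotProduct_comm, ← dotProduct_transpose_mulVec, h4, ← mulVec_mulVec, hMz,
      mulVec_zero, dotProduct_zero]
  have hzz : z ⬝ᵥ z = 0 := by
    rw [sub_dotProduct, hx z hMz, hPMz, sub_zero]
  exact (sub_eq_zero.mp (dotProduct_self_eq_zero.mp hzz)).symm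

theorem exists_eq_mulVec_of_orthogonal_ker (hP : IsMoorePenrose M P) (hMsymm : Mᵀ = M)
    {x : Fin n → ℝ} (hx : ∀ y, M *ᵥ y = 0 → x ⬝ᵥ y = 0) : ∃ y, x = M *ᵥ y := by
  refine ⟨Pᵀ *ᵥ x, ?_⟩
  conv_lhs => rw [← hP.mulVec_mulVec_eq_of_orthogonal_ker hx]
  rw [mulVec_mulVec, ← hP.2.2.2, transpose_mul, hMsymm, mulVec_mulVec]

theorem transpose_mulVec_dotProduct_mulVec (hP : IsMoorePenrose M P) (y z : Fin n → ℝ) :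
    (Mᵀ *ᵥ y) ⬝ᵥ P *ᵥ (M *ᵥ z) = y ⬝ᵥ M *ᵥ z := by
  rw [dotProduct_comm, dotProduct_transpose_mulVec, mulVec_mulVec, mulVec_mulVec, hP.1]

theorem dotProduct_mulVec_congr (hP : IsMoorePenrose M P) (hMsymm : Mᵀ = M)
    {T U : Matrix (Fin n) (Fin n) ℝ} (hTU : T * U = 1) (hQ : IsMoorePenrose (Tᵀ * M * T) Q)
    {x : Fin n → ℝ} (hx : ∀ y, M *ᵥ y = 0 → x ⬝ᵥ y = 0) :
    (Tᵀ *ᵥ x) ⬝ᵥ Q *ᵥ (Tᵀ *ᵥ x) = x ⬝ᵥ P *ᵥ x := by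
  obtain ⟨y, rfl⟩ := hP.exists_eq_mulVec_of_orthogonal_ker hMsymm hx
  have hTx : Tᵀ *ᵥ (M *ᵥ y) = (Tᵀ * M * T) *ᵥ (U *ᵥ y) := by
    rw [mulVec_mulVec, mulVec_mulVec, mul_assoc (Tᵀ * M), hTU, mul_one]
  have hN : (Tᵀ * M * T)ᵀ = Tᵀ * M * T := by
    rw [transpose_mul, transpose_mul, transpose_transpose, hMsymm, mul_assoc]
  have hUNU : Uᵀ * (Tᵀ * M * T) * U = M := by
    rw [show Uᵀ * (Tᵀ * M * T) * U = (T * U)ᵀ * M * (T * U) by simp only [transpose_mul, mul_assoc],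
      hTU, transpose_one, one_mul, mul_one]
  have hQN := hQ.transpose_mulVec_dotProduct_mulVec (U *ᵥ y) (U *ᵥ y)
  rw [hN] at hQN
  calc (Tᵀ *ᵥ (M *ᵥ y)) ⬝ᵥ Q *ᵥ (Tᵀ *ᵥ (M *ᵥ y))
      = (U *ᵥ y) ⬝ᵥ (Tᵀ * M * T) *ᵥ (U *ᵥ y) := by rw [hTx, hQN]
    _ = (Mᵀ *ᵥ y) ⬝ᵥ P *ᵥ (M *ᵥ y) := by
      rw [mulVec_dotProduct_mulVec, hUNU, hP.transpose_mulVec_dotProduct_mulVec]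
    _ = (M *ᵥ y) ⬝ᵥ P *ᵥ (M *ᵥ y) := by rw [hMsymm]

end IsMoorePenrose

theorem dotProduct_mulVec_conj_of_mul_eq_one {n : ℕ} {S R Q : Matrix (Fin n) (Fin n) ℝ}
    (hRS : R * S = 1) (hR : Rᵀ = R) (x : Fin n → ℝ) :
    ((R * R) *ᵥ x) ⬝ᵥ (S * Q * R) *ᵥ x = (R *ᵥ x) ⬝ᵥ Q *ᵥ (R *ᵥ x) := by
  have hRRSQR : R * R * (S * Q * R) = R * Q * R := by
    rw [← mul_assoc, ← mul_assoc, mul_assoc R R S, hRS, mul_one]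
  rw [dotProduct_comm, ← dotProduct_transpose_mulVec, mulVec_mulVec, transpose_mul, hR, hRRSQR,
    mulVec_dotProduct_mulVec, hR]

theorem stmt0_general {n : ℕ} (d : Fin n → ℝ) (hd : ∀ i, 0 < d i)
    (A : Matrix (Fin n) (Fin n) ℝ) (hAsymm : Aᵀ = A)
    (M N : Matrix (Fin n) (Fin n) ℝ)
    (hM : M = Matrix.diagonal d - A)
    (hN : N = Matrix.diagonal (fun i => (Real.sqrt (d i))⁻¹) * M *
      Matrix.diagonal (fun i => (Real.sqrt (d i))⁻¹))
    (Mdag Ndag Nhalfdag : Matrix (Fin n) (Fin n) ℝ)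
    (hMdag : IsMoorePenrose M Mdag) (hNdag : IsMoorePenrose N Ndag)
    (hNhalfdag : IsMoorePenrose ((1 / 2 : ℝ) • N) Nhalfdag)
    (x : Fin n → ℝ) (hx : ∀ y, M.mulVec y = 0 → x ⬝ᵥ y = 0) :
    x ⬝ᵥ Mdag.mulVec x =
      (1 / 2) * ((Matrix.diagonal (fun i => (d i)⁻¹)).mulVec x ⬝ᵥ
        (Matrix.diagonal (fun i => Real.sqrt (d i)) * Nhalfdag *
          Matrix.diagonal (fun i => (Real.sqrt (d i))⁻¹)).mulVec x) ∧
    x ⬝ᵥ Mdag.mulVec x =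
      (Matrix.diagonal (fun i => (Real.sqrt (d i))⁻¹)).mulVec x ⬝ᵥ
        Ndag.mulVec ((Matrix.diagonal (fun i => (Real.sqrt (d i))⁻¹)).mulVec x) := by
  set S := Matrix.diagonal (fun i => Real.sqrt (d i))
  set R := Matrix.diagonal (fun i => (Real.sqrt (d i))⁻¹)
  have hsqrt (i : Fin n) : Real.sqrt (d i) ≠ 0 := (Real.sqrt_pos.2 (hd i)).ne'
  have hRS : R * S = 1 := by
    simp only [R, S, diagonal_mul_diagonal, inv_mul_cancel₀ (hsqrt _), diagonal_one]
  have hR : Rᵀ = R := diagonal_transpose _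
  have hD : Matrix.diagonal (fun i => (d i)⁻¹) = R * R := by
    simp only [R, diagonal_mul_diagonal, ← mul_inv, Real.mul_self_sqrt (hd _).le]
  have hMsymm : Mᵀ = M := by rw [hM, transpose_sub, diagonal_transpose, hAsymm]
  have hNdag' : IsMoorePenrose (Rᵀ * M * R) Ndag := by rwa [hR, ← hN]
  have hNhalf : Nhalfdag = (2 : ℝ) • Ndag := by
    refine hNhalfdag.unique ?_
    simpa using hNdag.smul (c := 1 / 2) (by norm_num)
  have hquad : x ⬝ᵥ Mdag *ᵥ x = (R *ᵥ x) ⬝ᵥ Ndag *ᵥ (R *ᵥ x) := by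
    rw [← hMdag.dotProduct_mulVec_congr hMsymm hRS hNdag' hx, hR]
  refine ⟨?_, hquad⟩
  rw [hquad, hD, hNhalf, mul_smul_comm, smul_mul_assoc, smul_mulVec, dotProduct_smul,
    smul_eq_mul, dotProduct_mulVec_conj_of_mul_eq_one hRS hR]
  ring

theorem stmt0 {n : ℕ} (d : Fin n → ℝ) (hd : ∀ i, 0 < d i)
    (A : Matrix (Fin n) (Fin n) ℝ) (hAsymm : Aᵀ = A) (hAdiag : ∀ i, A i i = 0)
    (hSDD : ∀ i, ∑ j, |A i j| < d i)
    (M N : Matrix (Fin n) (Fin n) ℝ)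
    (hM : M = Matrix.diagonal d - A)
    (hN : N = Matrix.diagonal (fun i => (Real.sqrt (d i))⁻¹) * M *
      Matrix.diagonal (fun i => (Real.sqrt (d i))⁻¹))
    (Mdag Ndag Nhalfdag : Matrix (Fin n) (Fin n) ℝ)
    (hMdag : IsMoorePenrose M Mdag) (hNdag : IsMoorePenrose N Ndag)
    (hNhalfdag : IsMoorePenrose ((1 / 2 : ℝ) • N) Nhalfdag)
    (x : Fin n → ℝ) (hx : ∀ y, M.mulVec y = 0 → x ⬝ᵥ y = 0) :
    x ⬝ᵥ Mdag.mulVec x =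
      (1 / 2) * ((Matrix.diagonal (fun i => (d i)⁻¹)).mulVec x ⬝ᵥ
        (Matrix.diagonal (fun i => Real.sqrt (d i)) * Nhalfdag *
          Matrix.diagonal (fun i => (Real.sqrt (d i))⁻¹)).mulVec x) ∧
    x ⬝ᵥ Mdag.mulVec x =
      (Matrix.diagonal (fun i => (Real.sqrt (d i))⁻¹)).mulVec x ⬝ᵥ
        Ndag.mulVec ((Matrix.diagonal (fun i => (Real.sqrt (d i))⁻¹)).mulVec x) :=
  stmt0_general d hd A hAsymm M N hM hN Mdag Ndag Nhalfdag hMdag hNdag hNhalfdag x hx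
end

section
/- Let A be the adjacency matrix of a simple undirected graph G and Ā a symmetric random signing of A. If tr(A³) = 0 then tr(Ā³) = 0 almost surely, and if tr(A³) > 0 (i.e., G contains at least one triangle) then P[|tr(Ā³)| > 0] ≥ 1/4. -/
/-!
Write `tr(B³) = ∑ B i j * B j k * B k i` over closed walks `i → j → k → i`. If `tr(A³) = 0` then,
`A` being nonnegative, every such product vanishes, and so does every product for the signing.
If `tr(A³) > 0`, pick a triangle `{a, b, c}`. Flipping the signs of the edges `ab` and `bc`
(each separately and both together) gives four equally likely signings, and the alternating sum
of their values of `tr(Ā³)` is `24 ξ_ab ξ_bc ξ_ca ≠ 0`, because only the six orderings of the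
triangle use both flipped edges. So at least one of the four signings has `tr(Ā³) ≠ 0`, and a
union bound over the four measure-preserving flips gives probability at least `1/4`.
-/

open Matrix MeasureTheory ProbabilityTheory

def negAt {ι R : Type*} [DecidableEq ι] [Neg R] (e : ι) (x : ι → R) : ι → R :=
  fun i => if i = e then -x i else x i

theorem Finset.sum_sum_sum_eq_of_cyclic {ι M : Type*} [Fintype ι] [AddCommMonoid M]
    (t : ι → ι → ι → M) (T : Finset ι) (ht : ∀ i j k, t i j k = t j k i)
    (hvanish : ∀ i j k, i ∉ T → t i j k = 0) :
    ∑ i, ∑ j, ∑ k, t i j k = ∑ i ∈ T, ∑ j ∈ T, ∑ k ∈ T, t i j k := by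
  refine (Finset.sum_subset (Finset.subset_univ _) fun i _ hi => ?_).symm.trans
    (Finset.sum_congr rfl fun i _ => (Finset.sum_subset (Finset.subset_univ _)
      fun j _ hj => ?_).symm.trans (Finset.sum_congr rfl fun j _ =>
        (Finset.sum_subset (Finset.subset_univ _) fun k _ hk => ?_).symm))
  · exact Finset.sum_eq_zero fun j _ => Finset.sum_eq_zero fun k _ => hvanish i j k hi
  · exact Finset.sum_eq_zero fun k _ => by rw [ht, hvanish j k i hj]
  · rw [ht, ht, hvanish k i j hk]

namespace Matrix

variable {ι R : Type*}

theorem trace_mul_mul_eq_sum [Fintype ι] [NonUnitalNonAssocSemiring R] (A B C : Matrix ι ι R) :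
    trace (A * B * C) = ∑ i, ∑ j, ∑ k, A i j * B j k * C k i := by
  simp only [trace, diag, mul_apply, Finset.sum_mul]
  exact Finset.sum_congr rfl fun i _ => Finset.sum_comm

theorem IsSymm.hadamard [Mul R] {A B : Matrix ι ι R} (hA : A.IsSymm) (hB : B.IsSymm) :
    (A ⊙ B).IsSymm := by
  rw [IsSymm, transpose_hadamard, hA.eq, hB.eq]

section Signing

variable [DecidableEq ι]

def pairSign [Neg R] [One R] (z : Sym2 ι) : Matrix ι ι R :=
  of fun i j => if s(i, j) = z then -1 else 1

variable [CommRing R]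

def cycleSign (z : Sym2 ι) (i j k : ι) : R :=
  pairSign z i j * pairSign z j k * pairSign z k i

theorem cycleSign_rotate (z : Sym2 ι) (i j k : ι) :
    cycleSign (R := R) z i j k = cycleSign z j k i := by
  simp only [cycleSign]
  ring

theorem one_sub_cycleSign_mul_one_sub_cycleSign_eq_zero {a b c i : ι} (hca : c ≠ a)
    (hia : i ≠ a) (hib : i ≠ b) (hic : i ≠ c) (j k : ι) :
    (1 - cycleSign (R := R) s(a, b) i j k) * (1 - cycleSign s(b, c) i j k) = 0 := by
  simp only [cycleSign, pairSign, of_apply, Sym2.eq_iff, hia, hib, hic, false_and, and_false,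
    or_false, if_false, mul_one, one_mul]
  split_ifs <;> first | (exfalso; grind) | ring1

variable [Fintype ι]

theorem trace_pow_three_mixed_difference (B : Matrix ι ι R) (hB : B.IsSymm) {a b c : ι}
    (hab : a ≠ b) (hbc : b ≠ c) (hca : c ≠ a) :
    trace (B ^ 3) - trace ((pairSign s(a, b) ⊙ B) ^ 3) - trace ((pairSign s(b, c) ⊙ B) ^ 3)
      + trace ((pairSign s(a, b) ⊙ (pairSign s(b, c) ⊙ B)) ^ 3)
      = 24 * (B a b * B b c * B c a) := by
  -- `(1 - cycleSign s(a, b)) * (1 - cycleSign s(b, c))` is `4` when the walk `i → j → k → i`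
  -- crosses both edges an odd number of times, and `0` otherwise.
  set t : ι → ι → ι → R := fun i j k =>
    B i j * B j k * B k i * ((1 - cycleSign s(a, b) i j k) * (1 - cycleSign s(b, c) i j k))
  have hsum : trace (B ^ 3) - trace ((pairSign s(a, b) ⊙ B) ^ 3)
      - trace ((pairSign s(b, c) ⊙ B) ^ 3)
      + trace ((pairSign s(a, b) ⊙ (pairSign s(b, c) ⊙ B)) ^ 3) = ∑ i, ∑ j, ∑ k, t i j k := by
    simp only [pow_three', trace_mul_mul_eq_sum, ← Finset.sum_sub_distrib,
      ← Finset.sum_add_distrib, hadamard_apply, t, cycleSign]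
    exact Finset.sum_congr rfl fun i _ => Finset.sum_congr rfl fun j _ =>
      Finset.sum_congr rfl fun k _ => by ring
  have hrestrict := Finset.sum_sum_sum_eq_of_cyclic t {a, b, c}
    (fun i j k => by simp only [t, cycleSign_rotate _ i j k]; ring)
    (fun i j k hi => by
      simp only [Finset.mem_insert, Finset.mem_singleton, not_or] at hi
      simp only [t, one_sub_cycleSign_mul_one_sub_cycleSign_eq_zero hca hi.1 hi.2.1 hi.2.2,
        mul_zero])
  have hba : B b a = B a b := hB.apply a b
  have hcb : B c b = B b c := hB.apply b c
  have hac : B a c = B c a := hB.apply c a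
  rw [hsum, hrestrict]
  simp only [cycleSign, pairSign, Sym2.eq, Sym2.rel_iff', Prod.mk.injEq, Prod.swap_prod_mk,
    of_apply, mul_ite, mul_neg, mul_one, Finset.mem_insert, hab, Finset.mem_singleton, hca.symm,
    or_self, not_false_eq_true, Finset.sum_insert, true_and, false_and, or_false, and_false,
    and_true, false_or, ↓reduceIte, hbc, hab.symm, Finset.sum_singleton, hca, hbc.symm, sub_self,
    mul_zero, neg_neg, hac, zero_add, hba, hcb, zero_mul, add_zero, sub_neg_eq_add, t]
  ring

theorem trace_pow_three_ne_zero_of_triangle [IsDomain R] [CharZero R] (B : Matrix ι ι R)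
    (hB : B.IsSymm) {a b c : ι} (hab : a ≠ b) (hbc : b ≠ c) (hca : c ≠ a)
    (hne : B a b * B b c * B c a ≠ 0) :
    trace (B ^ 3) ≠ 0 ∨ trace ((pairSign s(a, b) ⊙ B) ^ 3) ≠ 0 ∨
      trace ((pairSign s(b, c) ⊙ B) ^ 3) ≠ 0 ∨
      trace ((pairSign s(a, b) ⊙ (pairSign s(b, c) ⊙ B)) ^ 3) ≠ 0 := by
  by_contra! h
  have := trace_pow_three_mixed_difference B hB hab hbc hca
  rw [h.1, h.2.1, h.2.2.1, h.2.2.2] at this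
  exact hne (by simpa using this.symm)

end Signing

section Triangles

variable [Fintype ι] [DecidableEq ι]

theorem trace_hadamard_pow_three_eq_zero [CommSemiring R] [PartialOrder R] [IsOrderedRing R]
    (A : Matrix ι ι R) (hA : ∀ i j, 0 ≤ A i j) (h : trace (A ^ 3) = 0) (S : Matrix ι ι R) :
    trace ((S ⊙ A) ^ 3) = 0 := by
  have hnn : ∀ i j k, 0 ≤ A i j * A j k * A k i := fun i j k =>
    mul_nonneg (mul_nonneg (hA i j) (hA j k)) (hA k i)
  rw [pow_three', trace_mul_mul_eq_sum] at h ⊢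
  refine Finset.sum_eq_zero fun i _ => Finset.sum_eq_zero fun j _ =>
    Finset.sum_eq_zero fun k _ => ?_
  have hijk : A i j * A j k * A k i = 0 := by
    refine le_antisymm ?_ (hnn i j k)
    calc A i j * A j k * A k i ≤ ∑ k', A i j * A j k' * A k' i :=
          Finset.single_le_sum (fun k' _ => hnn i j k') (Finset.mem_univ k)
      _ ≤ ∑ j', ∑ k', A i j' * A j' k' * A k' i :=
          Finset.single_le_sum (f := fun j' => ∑ k', A i j' * A j' k' * A k' i)
            (fun j' _ => Finset.sum_nonneg fun k' _ => hnn i j' k') (Finset.mem_univ j)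
      _ ≤ ∑ i', ∑ j', ∑ k', A i' j' * A j' k' * A k' i' :=
          Finset.single_le_sum (f := fun i' => ∑ j', ∑ k', A i' j' * A j' k' * A k' i')
            (fun i' _ => Finset.sum_nonneg fun j' _ => Finset.sum_nonneg fun k' _ => hnn i' j' k')
            (Finset.mem_univ i)
      _ = 0 := h
  calc (S ⊙ A) i j * (S ⊙ A) j k * (S ⊙ A) k i
      = S i j * S j k * S k i * (A i j * A j k * A k i) := by simp only [hadamard_apply]; ring
    _ = 0 := by rw [hijk, mul_zero]

theorem exists_mul_mul_ne_zero_of_trace_ne_zero [CommRing R] (A : Matrix ι ι R)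
    (h : trace (A ^ 3) ≠ 0) : ∃ a b c, A a b * A b c * A c a ≠ 0 := by
  rw [pow_three', trace_mul_mul_eq_sum] at h
  obtain ⟨a, -, ha⟩ := Finset.exists_ne_zero_of_sum_ne_zero h
  obtain ⟨b, -, hb⟩ := Finset.exists_ne_zero_of_sum_ne_zero ha
  obtain ⟨c, -, hc⟩ := Finset.exists_ne_zero_of_sum_ne_zero hb
  exact ⟨a, b, c, hc⟩

end Triangles

section StrictUpper

variable [LinearOrder ι]

def symmOfStrictUpper [Zero R] (x : {p : ι × ι // p.1 < p.2} → R) : Matrix ι ι R :=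
  of fun i j => if h : i < j then x ⟨(i, j), h⟩ else if h : j < i then x ⟨(j, i), h⟩ else 0

theorem isSymm_symmOfStrictUpper [Zero R] (x : {p : ι × ι // p.1 < p.2} → R) :
    (symmOfStrictUpper x).IsSymm := by
  refine IsSymm.ext fun i j => ?_
  rcases lt_trichotomy i j with h | rfl | h
  · simp [symmOfStrictUpper, h, h.not_gt]
  · rfl
  · simp [symmOfStrictUpper, h, h.not_gt]

theorem symmOfStrictUpper_apply_of_ne [Zero R] {Y : ι → ι → R} (hY : ∀ i j, Y i j = Y j i)
    {i j : ι} (h : i ≠ j) : symmOfStrictUpper (fun e => Y e.1.1 e.1.2) i j = Y i j := by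
  rcases h.lt_or_gt with h | h
  · simp [symmOfStrictUpper, h]
  · simp [symmOfStrictUpper, h, h.not_gt, hY j i]

theorem symmOfStrictUpper_apply_ne_zero [Zero R] {x : {p : ι × ι // p.1 < p.2} → R}
    (hx : ∀ e, x e ≠ 0) {i j : ι} (h : i ≠ j) : symmOfStrictUpper x i j ≠ 0 := by
  rcases h.lt_or_gt with h | h
  · simpa [symmOfStrictUpper, h] using hx _
  · simpa [symmOfStrictUpper, h, h.not_gt] using hx _

theorem continuous_symmOfStrictUpper [Zero R] [TopologicalSpace R] :
    Continuous (symmOfStrictUpper : ({p : ι × ι // p.1 < p.2} → R) → Matrix ι ι R) := by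
  refine continuous_pi fun i => continuous_pi fun j => ?_
  simp only [symmOfStrictUpper, of_apply]
  split_ifs
  exacts [continuous_apply _, continuous_apply _, continuous_const]

theorem strictUpper_mk_eq_iff {i j : ι} (h : i < j) (e : {p : ι × ι // p.1 < p.2}) :
    (⟨(i, j), h⟩ : {p : ι × ι // p.1 < p.2}) = e ↔ s(i, j) = s(e.1.1, e.1.2) := by
  refine ⟨fun he => he ▸ rfl, fun he => ?_⟩
  rcases Sym2.eq_iff.1 he with ⟨rfl, rfl⟩ | ⟨rfl, rfl⟩
  · rfl
  · exact absurd (h.trans e.2) (lt_irrefl _)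

theorem symmOfStrictUpper_negAt [Ring R] (e : {p : ι × ι // p.1 < p.2})
    (x : {p : ι × ι // p.1 < p.2} → R) :
    symmOfStrictUpper (negAt e x) = pairSign s(e.1.1, e.1.2) ⊙ symmOfStrictUpper x := by
  ext i j
  rcases lt_trichotomy i j with h | rfl | h
  · simp [symmOfStrictUpper, negAt, pairSign, h, strictUpper_mk_eq_iff h]
  · simp [symmOfStrictUpper, pairSign]
  · simp [symmOfStrictUpper, negAt, pairSign, h, h.not_gt, strictUpper_mk_eq_iff h, Sym2.eq_swap]

end StrictUpper

end Matrix

theorem measurePreserving_negAt {ι : Type*} [Fintype ι] [DecidableEq ι] {ν : ι → Measure ℝ}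
    [∀ i, SigmaFinite (ν i)] (hν : ∀ i, MeasurePreserving Neg.neg (ν i) (ν i)) (e : ι) :
    MeasurePreserving (negAt e) (Measure.pi ν) (Measure.pi ν) := by
  convert measurePreserving_pi ν ν (f := fun i => if i = e then Neg.neg else id) fun i => by
    split_ifs
    · exact hν i
    · exact MeasurePreserving.id _ using 1
  funext x i
  simp only [negAt]
  split_ifs <;> rfl

theorem map_eq_of_forall_eq_one_or_eq_neg_one {Ω : Type*} [MeasurableSpace Ω] (P : Measure Ω)
    {g : Ω → ℝ} (hg : Measurable g) (hval : ∀ ω, g ω = 1 ∨ g ω = -1) :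
    P.map g = P {ω | g ω = 1} • Measure.dirac 1 + P {ω | g ω = -1} • Measure.dirac (-1) := by
  ext s hs
  have hdisj : Disjoint {ω | g ω = 1} {ω | g ω = -1} :=
    Set.disjoint_left.2 fun ω h1 h2 => by norm_num [show g ω = 1 from h1] at h2
  have hpre : g ⁻¹' s = {ω | g ω = 1 ∧ (1 : ℝ) ∈ s} ∪ {ω | g ω = -1 ∧ (-1 : ℝ) ∈ s} := by
    ext ω
    rcases hval ω with h | h <;> norm_num [h]
  rw [Measure.map_apply hg hs, hpre]
  by_cases h1 : (1 : ℝ) ∈ s <;> by_cases h2 : (-1 : ℝ) ∈ s <;>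
    simp [h1, h2, measure_union hdisj (hg (measurableSet_singleton _)), Measure.dirac_apply' _ hs]

theorem measurePreserving_neg_map_of_forall_eq_one_or_eq_neg_one {Ω : Type*}
    [MeasurableSpace Ω] (P : Measure Ω) {g : Ω → ℝ} (hg : Measurable g)
    (hval : ∀ ω, g ω = 1 ∨ g ω = -1) (hsymm : P {ω | g ω = 1} = P {ω | g ω = -1}) :
    MeasurePreserving Neg.neg (P.map g) (P.map g) := by
  refine ⟨measurable_neg, ?_⟩
  rw [map_eq_of_forall_eq_one_or_eq_neg_one P hg hval, Measure.map_add _ _ measurable_neg,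
    Measure.map_smul, Measure.map_smul, Measure.map_dirac' measurable_neg,
    Measure.map_dirac' measurable_neg, neg_neg, hsymm, add_comm]

theorem prob_eq_one_eq_prob_eq_neg_one {Ω : Type*} [MeasurableSpace Ω] {P : Measure Ω}
    [IsProbabilityMeasure P] {g : Ω → ℝ} (hg : Measurable g) (hval : ∀ ω, g ω = 1 ∨ g ω = -1)
    (hhalf : P {ω | g ω = 1} = 1 / 2) : P {ω | g ω = 1} = P {ω | g ω = -1} := by
  have : {ω | g ω = -1} = {ω | g ω = 1}ᶜ := by
    ext ω
    rcases hval ω with h | h <;> norm_num [h]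
  rw [this, prob_compl_eq_one_sub (measurableSet_eq_fun hg measurable_const), hhalf, one_div,
    ENNReal.one_sub_inv_two]

theorem measurePreserving_negAt_map_of_iIndepFun {Ω ι : Type*} [MeasurableSpace Ω] [Fintype ι]
    [DecidableEq ι] {P : Measure Ω} {g : ι → Ω → ℝ} (hg : ∀ i, Measurable (g i))
    (hval : ∀ i ω, g i ω = 1 ∨ g i ω = -1) (hsymm : ∀ i, P {ω | g i ω = 1} = P {ω | g i ω = -1})
    (hindep : iIndepFun g P) (e : ι) :
    MeasurePreserving (negAt e) (P.map fun ω i => g i ω) (P.map fun ω i => g i ω) := by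
  have := hindep.isProbabilityMeasure
  rw [hindep.map_fun_eq_pi_map fun i => (hg i).aemeasurable]
  exact measurePreserving_negAt (fun i =>
    measurePreserving_neg_map_of_forall_eq_one_or_eq_neg_one P (hg i) (hval i) (hsymm i)) e

theorem measure_univ_le_card_mul_of_ae_exists_mem {X ι : Type*} [MeasurableSpace X] [Fintype ι]
    {μ : Measure X} {f : ι → X → X} (hf : ∀ i, MeasurePreserving (f i) μ μ) {S : Set X}
    (hS : MeasurableSet S) (hcover : ∀ᵐ x ∂μ, ∃ i, f i x ∈ S) :
    μ Set.univ ≤ Fintype.card ι * μ S :=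
  calc μ Set.univ ≤ μ (⋃ i, f i ⁻¹' S) := measure_mono_ae <| by
        filter_upwards [hcover] with x ⟨i, hi⟩ _ using Set.mem_iUnion.2 ⟨i, hi⟩
    _ ≤ ∑ i, μ (f i ⁻¹' S) := measure_iUnion_fintype_le _ _
    _ = Fintype.card ι * μ S := by
        simp [(hf _).measure_preimage hS.nullMeasurableSet]

theorem one_div_four_le_prob_trace_pow_three_ne_zero {ι : Type*} [Fintype ι] [LinearOrder ι]
    (A : Matrix ι ι ℝ) (hA : A.IsSymm) {a b c : ι} (hab : a ≠ b) (hbc : b ≠ c) (hca : c ≠ a)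
    (htri : A a b * A b c * A c a ≠ 0) {Ω : Type*} [MeasurableSpace Ω] (P : Measure Ω)
    [IsProbabilityMeasure P] {X : Ω → {p : ι × ι // p.1 < p.2} → ℝ} (hX : Measurable X)
    (hneg : ∀ e, MeasurePreserving (negAt e) (P.map X) (P.map X))
    (hnz : ∀ᵐ ω ∂P, ∀ e, X ω e ≠ 0) :
    1 / 4 ≤ P {ω | trace ((symmOfStrictUpper (X ω) ⊙ A) ^ 3) ≠ 0} := by
  have hedge : ∀ {i j : ι}, i ≠ j → ∃ e : {p : ι × ι // p.1 < p.2}, s(e.1.1, e.1.2) = s(i, j) :=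
    fun {i j} h => h.lt_or_gt.elim (fun h => ⟨⟨(i, j), h⟩, rfl⟩)
      (fun h => ⟨⟨(j, i), h⟩, Sym2.eq_swap⟩)
  obtain ⟨e₁, he₁⟩ := hedge hab
  obtain ⟨e₂, he₂⟩ := hedge hbc
  set S := {x | trace ((symmOfStrictUpper x ⊙ A) ^ 3) ≠ 0}
  have hS : MeasurableSet S := by
    have hB : Continuous fun x => symmOfStrictUpper x ⊙ A :=
      continuous_pi fun i => continuous_pi fun j => ((continuous_apply j).comp
        ((continuous_apply i).comp continuous_symmOfStrictUpper)).mul continuous_const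
    exact ((hB.pow 3).matrix_trace.measurable) (measurableSet_singleton 0).compl
  have hcover : ∀ᵐ x ∂(P.map X), ∃ i, ![id, negAt e₁, negAt e₂, negAt e₁ ∘ negAt e₂] i x ∈ S := by
    filter_upwards [(ae_map_iff hX.aemeasurable (p := fun x => ∀ e, x e ≠ 0)
      (by measurability)).2 hnz] with x hx
    have hne : (symmOfStrictUpper x ⊙ A) a b * (symmOfStrictUpper x ⊙ A) b c
        * (symmOfStrictUpper x ⊙ A) c a ≠ 0 := by
      have := symmOfStrictUpper_apply_ne_zero hx hab
      have := symmOfStrictUpper_apply_ne_zero hx hbc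
      have := symmOfStrictUpper_apply_ne_zero hx hca
      simp_all [hadamard_apply]
    have := trace_pow_three_ne_zero_of_triangle _
      ((isSymm_symmOfStrictUpper x).hadamard hA) hab hbc hca hne
    simpa [Fin.exists_fin_succ, S, symmOfStrictUpper_negAt, he₁, he₂, hadamard_assoc] using this
  have h4 := measure_univ_le_card_mul_of_ae_exists_mem (fun i => by
    fin_cases i
    exacts [MeasurePreserving.id _, hneg e₁, hneg e₂, (hneg e₁).comp (hneg e₂)]) hS hcover
  have := Measure.isProbabilityMeasure_map (μ := P) hX.aemeasurable
  rw [measure_univ, Fintype.card_fin, Measure.map_apply hX hS] at h4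
  exact ENNReal.div_le_of_le_mul' (by exact_mod_cast h4)

theorem stmt17 {Ω : Type*} [MeasureSpace Ω] [IsProbabilityMeasure (ℙ : Measure Ω)]
    {n : ℕ} (A : Matrix (Fin n) (Fin n) ℝ)
    (hAsymm : Aᵀ = A) (hA01 : ∀ i j, A i j = 0 ∨ A i j = 1) (hAdiag : ∀ i, A i i = 0)
    (ξ : Fin n → Fin n → Ω → ℝ)
    (hξsymm : ∀ i j, ξ i j = ξ j i)
    (hmeas : ∀ i j, Measurable (ξ i j))
    (hval : ∀ i j ω, ξ i j ω = 1 ∨ ξ i j ω = -1)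
    (hdist : ∀ i j, ℙ {ω | ξ i j ω = 1} = 1 / 2)
    (hindep : iIndepFun
      (fun p : {p : Fin n × Fin n // p.1 < p.2} => ξ p.1.1 p.1.2) ℙ)
    (Abar : Ω → Matrix (Fin n) (Fin n) ℝ)
    (hAbar : ∀ ω i j, Abar ω i j = ξ i j ω * A i j) :
    (Matrix.trace (A * A * A) = 0 →
      ∀ ω, Matrix.trace (Abar ω * Abar ω * Abar ω) = 0) ∧
    (0 < Matrix.trace (A * A * A) →
      (1 / 4 : ENNReal) ≤ ℙ {ω | 0 < |Matrix.trace (Abar ω * Abar ω * Abar ω)|}) := by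
  simp only [← pow_three', abs_pos]
  refine ⟨fun h0 ω => ?_, fun hpos => ?_⟩
  · have hAbar' : Abar ω = (of fun i j => ξ i j ω) ⊙ A := by ext i j; simp [hAbar]
    refine hAbar' ▸ trace_hadamard_pow_three_eq_zero A (fun i j => ?_) h0 _
    rcases hA01 i j with h | h <;> simp [h]
  obtain ⟨a, b, c, htri⟩ := exists_mul_mul_ne_zero_of_trace_ne_zero A hpos.ne'
  obtain ⟨⟨hab, hbc⟩, hca⟩ := (mul_ne_zero_iff.1 htri).imp_left mul_ne_zero_iff.1
  have hne : ∀ {i j}, A i j ≠ 0 → i ≠ j := fun h hij => h (hij ▸ hAdiag _)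
  have hAbar' : ∀ ω, Abar ω = symmOfStrictUpper (fun e => ξ e.1.1 e.1.2 ω) ⊙ A := fun ω => by
    ext i j
    rcases eq_or_ne i j with rfl | hij
    · simp [hAbar, hAdiag]
    · simp [hAbar, symmOfStrictUpper_apply_of_ne (fun i j => congrFun (hξsymm i j) ω) hij]
  refine (one_div_four_le_prob_trace_pow_three_ne_zero A hAsymm (hne hab) (hne hbc) (hne hca)
    htri ℙ (measurable_pi_lambda _ fun e => hmeas _ _)
    (measurePreserving_negAt_map_of_iIndepFun (fun e => hmeas _ _) (fun e => hval _ _)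
      (fun e => prob_eq_one_eq_prob_eq_neg_one (hmeas _ _) (hval _ _) (hdist _ _)) hindep)
    (ae_of_all _ fun ω e => ?_)).trans_eq (by simp only [hAbar'])
  rcases hval e.1.1 e.1.2 ω with h | h <;> norm_num [h]
end
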